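/- Let 0 < γ ≤ 1, X ∈ St(d,r), v ∈ ℝ^{d×r}, h : ℝ^{d×r} → ℝ convex, and f : ℝ^{d×r} → ℝ differentiable. Let ζ be the minimizer over T_X of ζ' ↦ ⟨v, ζ'⟩ + (1/(2γ))‖ζ'‖² + h(X + ζ'), and let ξ be the minimizer over T_X of ξ' ↦ ⟨∇f(X), ξ'⟩ + (1/(2γ))‖ξ'‖² + h(X + ξ'). Suppose M₁ > 0 satisfies ‖Retr_X(χ) − X‖ ≤ M₁‖χ‖ for all χ ∈ T_X, where Retr is the polar retraction. Define G = (X − Retr_X(γξ))/γ. Then ‖G‖² ≤ 2M₁²(7‖ζ‖² + 4γ‖v − ∇f(X)‖²). -/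

import Mathlib

open Matrix MeasureTheory Finset

noncomputable section

/-- The space of real `d × r` matrices. -/
abbrev Mat (d r : ℕ) := Matrix (Fin d) (Fin r) ℝ

/-- The Frobenius inner product `⟨A, B⟩ = tr(Aᵀ B)`. -/
def finner {d r : ℕ} (A B : Mat d r) : ℝ := (Aᵀ * B).trace

/-- The Stiefel manifold `St(d,r) = {X : Xᵀ X = I}`. -/
def Stiefel {d r : ℕ} (X : Mat d r) : Prop := Xᵀ * X = 1

/-- The tangent space to the Stiefel manifold at `X`:
`T_X = {ζ : ζᵀ X + Xᵀ ζ = 0}`. -/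
def TangentAt {d r : ℕ} (X : Mat d r) : Set (Mat d r) :=
  {ζ | ζᵀ * X + Xᵀ * ζ = 0}

lemma posSemidef_one_add_transpose_mul_self {d r : ℕ} (ξ : Mat d r) :
    (1 + ξᵀ * ξ).PosSemidef := by
  have h := Matrix.posSemidef_conjTranspose_mul_self ξ
  rw [Matrix.conjTranspose_eq_transpose_of_trivial] at h
  exact Matrix.PosSemidef.one.add h

/-- The polar retraction `Retr_X(ξ) = (X + ξ)(I + ξᵀ ξ)^{-1/2}`, where the square root
is the unique positive-semidefinite (here positive-definite) square root. -/
def posSemidefSqrt {n : Type*} [Fintype n] [DecidableEq n] {A : Matrix n n ℝ}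
    (hA : A.PosSemidef) : Matrix n n ℝ :=
  hA.1.eigenvectorUnitary.1 * diagonal ((↑) ∘ (Real.sqrt ·) ∘ hA.1.eigenvalues) *
    (star hA.1.eigenvectorUnitary : Matrix n n ℝ)

def polarRetr {d r : ℕ} (X ξ : Mat d r) : Mat d r :=
  (X + ξ) * (posSemidefSqrt (posSemidef_one_add_transpose_mul_self ξ))⁻¹

/- Equip matrices with the Frobenius norm (the norm induced by `finner`). -/
attribute [local instance] Matrix.frobeniusNormedAddCommGroup Matrix.frobeniusNormedSpace

section Aux
variable {d r : ℕ}

lemma finner_eq_sum (A B : Mat d r) : finner A B = ∑ i, ∑ j, A i j * B i j := by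
  simp only [finner, Matrix.trace, Matrix.diag, Matrix.mul_apply, Matrix.transpose_apply]
  exact Finset.sum_comm

lemma norm_sq_eq (A : Mat d r) : ‖A‖ ^ 2 = finner A A := by
  rw [Matrix.frobenius_norm_def, ← Real.rpow_natCast _ 2, ← Real.rpow_mul (by positivity)]
  norm_num
  rw [finner_eq_sum]
  exact Finset.sum_congr rfl fun i _ => Finset.sum_congr rfl fun j _ => pow_two _

lemma finner_comm (A B : Mat d r) : finner A B = finner B A := by
  simp only [finner_eq_sum]
  exact Finset.sum_congr rfl fun i _ => Finset.sum_congr rfl fun j _ => mul_comm _ _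

lemma finner_add_right (A B C : Mat d r) : finner A (B + C) = finner A B + finner A C := by
  simp [finner_eq_sum, mul_add, Finset.sum_add_distrib]

lemma finner_sub_right (A B C : Mat d r) : finner A (B - C) = finner A B - finner A C := by
  simp [finner_eq_sum, mul_sub, Finset.sum_sub_distrib]

lemma finner_smul_right (c : ℝ) (A B : Mat d r) : finner A (c • B) = c * finner A B := by
  simp only [finner_eq_sum, Finset.mul_sum, Matrix.smul_apply, smul_eq_mul]
  exact Finset.sum_congr rfl fun i _ => Finset.sum_congr rfl fun j _ => by ring

lemma finner_add_left (A B C : Mat d r) : finner (A + B) C = finner A C + finner B C := by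
  rw [finner_comm, finner_add_right, finner_comm A, finner_comm B]

lemma finner_sub_left (A B C : Mat d r) : finner (A - B) C = finner A C - finner B C := by
  rw [finner_comm, finner_sub_right, finner_comm A, finner_comm B]

lemma finner_smul_left (c : ℝ) (A B : Mat d r) : finner (c • A) B = c * finner A B := by
  rw [finner_comm, finner_smul_right, finner_comm]

lemma finner_cs (A B : Mat d r) : finner A B ≤ ‖A‖ * ‖B‖ := by
  have e : ∀ (C D : Mat d r), finner C D =
      ∑ p ∈ Finset.univ ×ˢ Finset.univ, C p.1 p.2 * D p.1 p.2 := by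
    intro C D; rw [finner_eq_sum, Finset.sum_product]
  have h2 := Finset.sum_mul_sq_le_sq_mul_sq (Finset.univ ×ˢ Finset.univ)
    (fun p : Fin d × Fin r => A p.1 p.2) (fun p => B p.1 p.2)
  simp only [sq] at h2
  rw [← e A B, ← e A A, ← e B B] at h2
  have hAA : finner A A = ‖A‖ ^ 2 := (norm_sq_eq A).symm
  have hBB : finner B B = ‖B‖ ^ 2 := (norm_sq_eq B).symm
  rw [hAA, hBB] at h2
  nlinarith [norm_nonneg A, norm_nonneg B, mul_nonneg (norm_nonneg A) (norm_nonneg B)]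

lemma tangent_smul {X : Mat d r} (c : ℝ) {ζ : Mat d r} (hζ : ζ ∈ TangentAt X) :
    c • ζ ∈ TangentAt X := by
  simp only [TangentAt, Set.mem_setOf_eq] at *
  rw [Matrix.transpose_smul, Matrix.smul_mul, Matrix.mul_smul, ← smul_add, hζ, smul_zero]

lemma tangent_combo {X : Mat d r} {a b : Mat d r} (ha : a ∈ TangentAt X) (hb : b ∈ TangentAt X) :
    (1/2 : ℝ) • a + (1/2 : ℝ) • b ∈ TangentAt X := by
  simp only [TangentAt, Set.mem_setOf_eq] at *
  have : ((1/2 : ℝ) • a + (1/2 : ℝ) • b)ᵀ * X + Xᵀ * ((1/2 : ℝ) • a + (1/2 : ℝ) • b)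
      = (1/2 : ℝ) • (aᵀ * X + Xᵀ * a) + (1/2 : ℝ) • (bᵀ * X + Xᵀ * b) := by
    rw [Matrix.transpose_add, Matrix.transpose_smul, Matrix.transpose_smul]
    rw [Matrix.add_mul, Matrix.mul_add, Matrix.smul_mul, Matrix.smul_mul,
      Matrix.mul_smul, Matrix.mul_smul, smul_add, smul_add]
    abel
  rw [this, ha, hb]; simp
end Aux

/-- The subproblem objective `φ(ζ) = ⟨v, ζ⟩ + (1/(2γ))‖ζ‖² + h(X + ζ)`. -/
def phi {d r : ℕ} (γ : ℝ) (h : Mat d r → ℝ) (X v ζ : Mat d r) : ℝ :=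
  finner v ζ + (1 / (2 * γ)) * ‖ζ‖ ^ 2 + h (X + ζ)

/-- `ζ` is a minimizer of `phi γ h X v` over the tangent space at `X`. -/
def IsSubMin {d r : ℕ} (γ : ℝ) (h : Mat d r → ℝ) (X v ζ : Mat d r) : Prop :=
  ζ ∈ TangentAt X ∧ ∀ ζ' ∈ TangentAt X, phi γ h X v ζ ≤ phi γ h X v ζ'

section Aux2
variable {d r : ℕ}

lemma strongMin {γ : ℝ} (hγ : 0 < γ) {h : Mat d r → ℝ} (hconv : ConvexOn ℝ Set.univ h)
    {X v ζ : Mat d r} (hmin : IsSubMin γ h X v ζ) {ζ' : Mat d r} (hζ' : ζ' ∈ TangentAt X) :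
    phi γ h X v ζ + (1 / (4 * γ)) * ‖ζ' - ζ‖ ^ 2 ≤ phi γ h X v ζ' := by
  set m : Mat d r := (1/2 : ℝ) • ζ + (1/2 : ℝ) • ζ' with hm_def
  have hm : m ∈ TangentAt X := tangent_combo hmin.1 hζ'
  have key := hmin.2 m hm
  have e1 : finner v m = (1/2) * finner v ζ + (1/2) * finner v ζ' := by
    rw [hm_def, finner_add_right, finner_smul_right, finner_smul_right]
  have e2 : ‖m‖ ^ 2 = (1/2) * ‖ζ‖ ^ 2 + (1/2) * ‖ζ'‖ ^ 2 - (1/4) * ‖ζ' - ζ‖ ^ 2 := by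
    rw [norm_sq_eq, norm_sq_eq, norm_sq_eq, norm_sq_eq, hm_def]
    simp only [finner_add_right, finner_add_left, finner_sub_right, finner_sub_left,
      finner_smul_right, finner_smul_left]
    ring_nf
  have e3 : h (X + m) ≤ (1/2) * h (X + ζ) + (1/2) * h (X + ζ') := by
    have hc := hconv.2 (Set.mem_univ (X + ζ)) (Set.mem_univ (X + ζ'))
      (by norm_num : (0:ℝ) ≤ 1/2) (by norm_num : (0:ℝ) ≤ 1/2) (by norm_num : (1/2:ℝ) + 1/2 = 1)
    have hx : X + m = (1/2 : ℝ) • (X + ζ) + (1/2 : ℝ) • (X + ζ') := by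
      rw [hm_def]; module
    rw [hx]
    simpa [smul_eq_mul] using hc
  have hc4 : (1 / (4 * γ)) = (1 / (2 * γ)) / 2 := by field_simp; ring
  unfold phi at key ⊢
  rw [e1, e2] at key
  set c := 1 / (2 * γ) with hc_def
  rw [hc4]
  have hcpos : 0 < c := by rw [hc_def]; positivity
  nlinarith [key, e3]
end Aux2

/-- Lemma `G-bounded`: with `ζ` the subproblem minimizer for `v`, `ξ` the
subproblem minimizer for `∇f(X)`, and `G = (X − Retr_X(γξ))/γ`, one has
`‖G‖² ≤ 2M₁²(7‖ζ‖² + 4γ‖v − ∇f(X)‖²)`. -/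
theorem gradient_mapping_bound {d r : ℕ} (γ : ℝ) (hγ : 0 < γ) (hγ1 : γ ≤ 1)
    (X : Mat d r) (hX : Stiefel X) (v : Mat d r)
    (h : Mat d r → ℝ) (hconv : ConvexOn ℝ Set.univ h)
    (f : Mat d r → ℝ) (hdiff : Differentiable ℝ f)
    (Gf : Mat d r) (hgrad : ∀ u : Mat d r, (fderiv ℝ f X) u = finner Gf u)
    (ζ ξ : Mat d r)
    (hζ : IsSubMin γ h X v ζ) (hξ : IsSubMin γ h X Gf ξ)
    (M₁ : ℝ) (hM₁ : 0 < M₁)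
    (hretr : ∀ χ ∈ TangentAt X, ‖polarRetr X χ - X‖ ≤ M₁ * ‖χ‖) :
    ‖(1 / γ) • (X - polarRetr X (γ • ξ))‖ ^ 2 ≤
      2 * M₁ ^ 2 * (7 * ‖ζ‖ ^ 2 + 4 * γ * ‖v - Gf‖ ^ 2) := by
  -- distance between the two minimizers
  have s1 := strongMin hγ hconv hζ hξ.1
  have s2 := strongMin hγ hconv hξ hζ.1
  rw [norm_sub_rev ζ ξ] at s2
  unfold phi at s1 s2
  have hip : finner v ξ - finner v ζ + finner Gf ζ - finner Gf ξ = finner (v - Gf) (ξ - ζ) := by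
    rw [finner_sub_left, finner_sub_right, finner_sub_right]; ring
  have hcs := finner_cs (v - Gf) (ξ - ζ)
  have hsum : (1/(2*γ)) * ‖ξ - ζ‖^2 ≤ ‖v - Gf‖ * ‖ξ - ζ‖ := by
    have hq : (1:ℝ)/(2*γ) = 1/(4*γ) + 1/(4*γ) := by field_simp; ring
    rw [hq]
    linarith
  have hdist : ‖ξ - ζ‖ ≤ 2 * γ * ‖v - Gf‖ := by
    by_cases h0 : ‖ξ - ζ‖ = 0
    · rw [h0]; positivity
    · have hpos : 0 < ‖ξ - ζ‖ := lt_of_le_of_ne (norm_nonneg _) (Ne.symm h0)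
      have h2 : ‖ξ - ζ‖^2 ≤ 2*γ*(‖v - Gf‖ * ‖ξ - ζ‖) := by
        have h3 := mul_le_mul_of_nonneg_left hsum (show (0:ℝ) ≤ 2*γ by positivity)
        calc ‖ξ - ζ‖^2 = 2*γ*((1/(2*γ)) * ‖ξ - ζ‖^2) := by field_simp
          _ ≤ _ := h3
      nlinarith [hpos]
  -- bound on ξ
  have hξn : ‖ξ‖ ≤ ‖ζ‖ + 2*γ*‖v - Gf‖ := by
    have : ξ = ζ + (ξ - ζ) := by abel
    calc ‖ξ‖ = ‖ζ + (ξ - ζ)‖ := by rw [← this]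
      _ ≤ ‖ζ‖ + ‖ξ - ζ‖ := norm_add_le _ _
      _ ≤ _ := by linarith
  have hξ2 : ‖ξ‖^2 ≤ (‖ζ‖ + 2*γ*‖v - Gf‖)^2 := pow_le_pow_left₀ (norm_nonneg _) hξn 2
  have hxi : ‖ξ‖^2 ≤ 14*‖ζ‖^2 + 8*γ*‖v - Gf‖^2 := by
    nlinarith [sq_nonneg (‖ζ‖ - 2*γ*‖v - Gf‖),
      mul_nonneg (mul_nonneg (sub_nonneg.2 hγ1) hγ.le) (sq_nonneg ‖v - Gf‖),
      norm_nonneg ζ, norm_nonneg (v - Gf), hγ]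
  -- retraction bound
  have hGξ : ‖(1 / γ) • (X - polarRetr X (γ • ξ))‖ ≤ M₁ * ‖ξ‖ := by
    have ht := hretr (γ • ξ) (tangent_smul γ hξ.1)
    rw [norm_smul, Real.norm_eq_abs, abs_of_pos hγ] at ht
    rw [norm_smul, Real.norm_eq_abs, abs_of_pos (show (0:ℝ) < 1/γ by positivity), norm_sub_rev]
    calc (1/γ) * ‖polarRetr X (γ • ξ) - X‖ ≤ (1/γ) * (M₁ * (γ * ‖ξ‖)) :=
          mul_le_mul_of_nonneg_left ht (by positivity)
      _ = M₁ * ‖ξ‖ := by field_simp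
  have hG2 : ‖(1 / γ) • (X - polarRetr X (γ • ξ))‖^2 ≤ (M₁ * ‖ξ‖)^2 := pow_le_pow_left₀ (norm_nonneg _) hGξ 2
  calc ‖(1 / γ) • (X - polarRetr X (γ • ξ))‖^2 ≤ M₁^2 * ‖ξ‖^2 := by rw [mul_pow] at hG2; exact hG2
    _ ≤ M₁^2 * (14*‖ζ‖^2 + 8*γ*‖v - Gf‖^2) :=
        mul_le_mul_of_nonneg_left hxi (sq_nonneg M₁)
    _ = 2 * M₁ ^ 2 * (7 * ‖ζ‖ ^ 2 + 4 * γ * ‖v - Gf‖ ^ 2) := by ring
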